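/- arXiv:2402.17143 — 3 statements merged into one kernel-verified Lean document; each statement's English description precedes it below -/
import Mathlib

section
/- Let F be a monotone subadditive quality cost with integer exponent α ≥ 1, let the predicted instance Ĵ be nonempty with 0 < OPT(Ĵ) < ∞, let 𝒥 be the true instance, let OfflineAlg be an optimal offline algorithm (γ_off = 1) and OnlineAlg be γ_on-competitive, and let λ ∈ (0,1). Then, for all values of the errors η₁ and η₂, the schedule S output by TPE with confidence parameter λ satisfies cost(S, 𝒥) ≤ max{ γ_on , (1 + γ_on·2^{2α}·λ^{1/α})/λ }·OPT(𝒥). -/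
/-! STATEMENT 2 (Corollary 3.5, robustness): with an optimal offline algorithm, TPE is max{γ_on, (1 + γ_on·2^{2α}·λ^{1/α})/λ}-robust, for all error values. -/

open MeasureTheory Finset
open scoped ENNReal BigOperators Classical

/-- A job: identifier, release time, processing time, weight. -/
structure Job where
  id : ℕ
  r : ℝ
  p : ℝ
  v : ℝ

noncomputable instance : DecidableEq Job := Classical.decEq _

/-- An instance is valid when release times are nonnegative and processing
times and weights are positive. -/
def ValidInstance (J : Finset Job) : Prop :=
  ∀ j ∈ J, 0 ≤ j.r ∧ 0 < j.p ∧ 0 < j.v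

/-- A schedule: speed functions for jobs. -/
abbrev Sched := Job → ℝ → ℝ

/-- `S` is a feasible schedule for the instance `J`. -/
def Feasible (J : Finset Job) (S : Sched) : Prop :=
  ∀ j ∈ J, Measurable (S j) ∧ (∀ t, 0 ≤ S j t) ∧ (∀ t, t < j.r → S j t = 0) ∧
    (∫ t in Set.Ici j.r, S j t) = j.p

/-- Work profile of job `j` under schedule `S`: remaining work at time `t`. -/
noncomputable def work (S : Sched) (j : Job) (t : ℝ) : ℝ :=
  j.p - ∫ u in Set.Icc j.r t, S j u

/-- Energy consumption of schedule `S` on instance `J`, with exponent `α`. -/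
noncomputable def energy (α : ℕ) (J : Finset Job) (S : Sched) : ℝ≥0∞ :=
  ∫⁻ t in Set.Ioi (0 : ℝ), ENNReal.ofReal ((∑ j ∈ J, S j t) ^ α)

/-- A quality cost function: depends only on the work profiles (and job
parameters), is subadditive, monotone in the work profiles, and monotone
under job-set inclusion. -/
structure QualityCost where
  F : Sched → Finset Job → ℝ≥0∞
  profile_congr : ∀ S S' J, (∀ j ∈ J, ∀ t, work S j t = work S' j t) → F S J = F S' J
  subadd : ∀ S J₁ J₂, Disjoint J₁ J₂ → F S (J₁ ∪ J₂) ≤ F S J₁ + F S J₂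
  mono_work : ∀ S S' J, (∀ j ∈ J, ∀ t, j.r ≤ t → work S j t ≤ work S' j t) → F S J ≤ F S' J
  mono_subset : ∀ S J' J, J' ⊆ J → F S J' ≤ F S J

/-- Total cost of a schedule: energy plus quality cost. -/
noncomputable def cost (Q : QualityCost) (α : ℕ) (S : Sched) (J : Finset Job) : ℝ≥0∞ :=
  energy α J S + Q.F S J

/-- Optimal (offline) cost of an instance. -/
noncomputable def OPT (Q : QualityCost) (α : ℕ) (J : Finset Job) : ℝ≥0∞ :=
  ⨅ (S : Sched) (_ : Feasible J S), cost Q α S J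

/-- Jobs of `J` released at or before time `t`. -/
noncomputable def restrictLE (J : Finset Job) (t : ℝ) : Finset Job :=
  J.filter fun j => j.r ≤ t

/-- Jobs of `J` released at or after time `t`. -/
noncomputable def restrictGE (J : Finset Job) (t : ℝ) : Finset Job :=
  J.filter fun j => t ≤ j.r

/-- `A` is a `γ`-competitive offline algorithm: on every instance it returns a
feasible schedule whose cost is between the optimum and `γ` times the optimum. -/
def OfflineCompetitive (Q : QualityCost) (α : ℕ) (γ : ℝ≥0∞) (A : Finset Job → Sched) : Prop :=
  ∀ K : Finset Job, ValidInstance K →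
    Feasible K (A K) ∧ OPT Q α K ≤ cost Q α (A K) K ∧ cost Q α (A K) K ≤ γ * OPT Q α K

/-- `A` is a `γ`-competitive online algorithm: on every instance it returns a
feasible schedule of cost at most `γ` times the optimum. -/
def OnlineCompetitive (Q : QualityCost) (α : ℕ) (γ : ℝ≥0∞) (A : Finset Job → Sched) : Prop :=
  ∀ K : Finset Job, ValidInstance K →
    Feasible K (A K) ∧ cost Q α (A K) K ≤ γ * OPT Q α K

/-- Cost `OFF(K)` achieved by the offline algorithm `Off` on instance `K`. -/
noncomputable def OFFcost (Q : QualityCost) (α : ℕ) (Off : Finset Job → Sched)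
    (K : Finset Job) : ℝ≥0∞ :=
  cost Q α (Off K) K

/-- `S` is the schedule output by the algorithm TPE with offline algorithm `Off`,
online algorithm `On`, prediction `Jhat`, true instance `J` and confidence `lam`:
either `OFF(𝒥_{≤t}) ≤ λ·OFF(Ĵ)` for all times `t ≥ 0` and TPE outputs `On(𝒥)`,
or TPE switches at the first time `t_λ` with `OFF(𝒥_{≤t_λ}) > λ·OFF(Ĵ)` and
outputs the combination of `OfflineAlg(Ĵ_{≥t_λ})` (for the correctly predicted
jobs `𝒥 ∩ Ĵ_{≥t_λ}`) and `OnlineAlg(𝒥 \ Ĵ_{≥t_λ})` (for all other jobs). -/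
def TPEOutput (Q : QualityCost) (α : ℕ) (Off On : Finset Job → Sched)
    (Jhat J : Finset Job) (lam : ℝ) (S : Sched) : Prop :=
  ((∀ t : ℝ, 0 ≤ t →
      OFFcost Q α Off (restrictLE J t) ≤ ENNReal.ofReal lam * OFFcost Q α Off Jhat) ∧
    S = On J) ∨
  (∃ tl : ℝ, 0 ≤ tl ∧
    ENNReal.ofReal lam * OFFcost Q α Off Jhat < OFFcost Q α Off (restrictLE J tl) ∧
    (∀ t : ℝ, 0 ≤ t →
      ENNReal.ofReal lam * OFFcost Q α Off Jhat < OFFcost Q α Off (restrictLE J t) → tl ≤ t) ∧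
    S = fun j t =>
      if j ∈ J ∩ restrictGE Jhat tl then Off (restrictGE Jhat tl) j t
      else On (J \ restrictGE Jhat tl) j t)

/-! In the switched case the TPE schedule runs the offline schedule `Ŝ` of `Ĵ_{≥t_λ}` on the
correctly predicted jobs and the online schedule on the rest. Convexity of `x ↦ x^α` splits
the energy of this superposition as `(1+μ)^{α-1}·E(Ŝ) + (1+1/μ)^{α-1}·E(S^on)`, and
subadditivity splits the quality cost. The first part is at most `OPT(Ĵ) ≤ OPT(𝒥)/λ`, because
switching means `λ·OPT(Ĵ) < OPT(𝒥_{≤t_λ})`; the second is at most `γ_on·OPT(𝒥)`. Choosing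
`μ = λ^{1/α}` balances the two weights into `(1 + γ_on·2^{2α}·μ)/λ`, once the excess
`(1+μ)^{α-1} - 1 ≤ (2^{α-1} - 1)·μ` of the first weight is charged to the online term through
`OPT(𝒥) ≤ γ_on·OPT(𝒥)`. -/

lemma ValidInstance.mono {J' J : Finset Job} (h : J' ⊆ J) (hJ : ValidInstance J) :
    ValidInstance J' :=
  fun j hj => hJ j (h hj)

lemma Feasible.mono {J' J : Finset Job} {S : Sched} (h : J' ⊆ J) (hS : Feasible J S) :
    Feasible J' S :=
  fun j hj => hS j (h hj)

lemma energy_mono_of_subset (α : ℕ) {J' J : Finset Job} {S : Sched} (h : J' ⊆ J)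
    (hnn : ∀ j ∈ J, ∀ t, 0 ≤ S j t) : energy α J' S ≤ energy α J S := by
  refine lintegral_mono fun t => ENNReal.ofReal_le_ofReal ?_
  exact pow_le_pow_left₀ (sum_nonneg fun j hj => hnn j (h hj) t)
    (sum_le_sum_of_subset_of_nonneg h fun j hj _ => hnn j hj t) α

lemma cost_mono_of_subset (Q : QualityCost) (α : ℕ) {J' J : Finset Job} {S : Sched}
    (h : J' ⊆ J) (hnn : ∀ j ∈ J, ∀ t, 0 ≤ S j t) : cost Q α S J' ≤ cost Q α S J :=
  add_le_add (energy_mono_of_subset α h hnn) (Q.mono_subset S J' J h)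

lemma OPT_le_cost (Q : QualityCost) (α : ℕ) {J : Finset Job} {S : Sched} (hS : Feasible J S) :
    OPT Q α J ≤ cost Q α S J :=
  iInf₂_le S hS

lemma OPT_mono (Q : QualityCost) (α : ℕ) {J' J : Finset Job} (h : J' ⊆ J) :
    OPT Q α J' ≤ OPT Q α J :=
  le_iInf₂ fun _ hS => (OPT_le_cost Q α (hS.mono h)).trans
    (cost_mono_of_subset Q α h fun j hj => (hS j hj).2.1)

lemma OfflineCompetitive.OFFcost_eq_OPT {Q : QualityCost} {α : ℕ} {Off : Finset Job → Sched}
    (hOff : OfflineCompetitive Q α 1 Off) {K : Finset Job} (hK : ValidInstance K) :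
    OFFcost Q α Off K = OPT Q α K := by
  obtain ⟨-, hge, hle⟩ := hOff K hK
  exact le_antisymm (by simpa [OFFcost] using hle) hge

lemma OnlineCompetitive.OPT_le_mul_OPT {Q : QualityCost} {α : ℕ} {γ : ℝ≥0∞}
    {On : Finset Job → Sched} (hOn : OnlineCompetitive Q α γ On) {K : Finset Job}
    (hK : ValidInstance K) : OPT Q α K ≤ γ * OPT Q α K :=
  (OPT_le_cost Q α (hOn K hK).1).trans (hOn K hK).2

lemma OfflineCompetitive.mul_OPT_le_of_lt_OFFcost {Q : QualityCost} {α : ℕ}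
    {Off : Finset Job → Sched} (hOff : OfflineCompetitive Q α 1 Off) {Jhat J : Finset Job}
    (hJhat : ValidInstance Jhat) (hJ : ValidInstance J) {c : ℝ≥0∞} {t : ℝ}
    (h : c * OFFcost Q α Off Jhat < OFFcost Q α Off (restrictLE J t)) :
    c * OPT Q α Jhat ≤ OPT Q α J := by
  have hJt : restrictLE J t ⊆ J := filter_subset _ _
  rw [hOff.OFFcost_eq_OPT hJhat, hOff.OFFcost_eq_OPT (hJ.mono hJt)] at h
  exact h.le.trans (OPT_mono Q α hJt)

lemma one_add_pow_le_one_add_mul (n : ℕ) {x : ℝ} (hx0 : 0 ≤ x) (hx1 : x ≤ 1) :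
    (1 + x) ^ n ≤ 1 + (2 ^ n - 1) * x := by
  have h := (convexOn_pow n).2 (Set.mem_Ici.2 zero_le_one) (Set.mem_Ici.2 zero_le_two)
    (sub_nonneg.2 hx1) hx0 (sub_add_cancel 1 x)
  simp only [smul_eq_mul, one_pow, mul_one] at h
  rw [show 1 - x + x * 2 = 1 + x by ring] at h
  linarith

lemma add_pow_succ_le_weighted (n : ℕ) {μ a b : ℝ} (hμ : 0 < μ) (ha : 0 ≤ a) (hb : 0 ≤ b) :
    (a + b) ^ (n + 1) ≤ (1 + μ) ^ n * a ^ (n + 1) + (1 + 1 / μ) ^ n * b ^ (n + 1) := by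
  -- `a + b` is the convex combination of `(1+μ)a` and `(1+1/μ)b` with weights `1/(1+μ)`, `μ/(1+μ)`
  have h := (convexOn_pow (n + 1)).2 (Set.mem_Ici.2 (by positivity : 0 ≤ (1 + μ) * a))
    (Set.mem_Ici.2 (by positivity : 0 ≤ (1 + 1 / μ) * b))
    (by positivity : 0 ≤ 1 / (1 + μ)) (by positivity : 0 ≤ μ / (1 + μ)) (by field_simp)
  simp only [smul_eq_mul] at h
  rw [show 1 / (1 + μ) * ((1 + μ) * a) + μ / (1 + μ) * ((1 + 1 / μ) * b) = a + b by
    field_simp; ring] at h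
  refine h.trans_eq ?_
  rw [mul_pow, mul_pow, pow_succ (1 + μ), pow_succ (1 + 1 / μ)]
  field_simp
  ring

lemma energy_le_of_sum_eq_add (n : ℕ) {μ : ℝ} (hμ : 0 < μ) {J A B : Finset Job}
    {S SA SB : Sched} (hsum : ∀ t, ∑ j ∈ J, S j t = ∑ j ∈ A, SA j t + ∑ j ∈ B, SB j t)
    (hA : Feasible A SA) (hB : Feasible B SB) :
    energy (n + 1) J S ≤ ENNReal.ofReal ((1 + μ) ^ n) * energy (n + 1) A SA
      + ENNReal.ofReal ((1 + 1 / μ) ^ n) * energy (n + 1) B SB := by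
  have hAnn : ∀ t, 0 ≤ ∑ j ∈ A, SA j t := fun t => sum_nonneg fun j hj => (hA j hj).2.1 t
  have hBnn : ∀ t, 0 ≤ ∑ j ∈ B, SB j t := fun t => sum_nonneg fun j hj => (hB j hj).2.1 t
  have hAmeas : Measurable fun t => ∑ j ∈ A, SA j t :=
    Finset.measurable_sum _ fun j hj => (hA j hj).1
  unfold energy
  calc ∫⁻ t in Set.Ioi 0, ENNReal.ofReal ((∑ j ∈ J, S j t) ^ (n + 1))
      ≤ ∫⁻ t in Set.Ioi 0,
          (ENNReal.ofReal ((1 + μ) ^ n) * ENNReal.ofReal ((∑ j ∈ A, SA j t) ^ (n + 1))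
            + ENNReal.ofReal ((1 + 1 / μ) ^ n)
              * ENNReal.ofReal ((∑ j ∈ B, SB j t) ^ (n + 1))) := by
        refine lintegral_mono fun t => ?_
        rw [← ENNReal.ofReal_mul (by positivity), ← ENNReal.ofReal_mul (by positivity),
          ← ENNReal.ofReal_add (mul_nonneg (by positivity) (pow_nonneg (hAnn t) _))
            (mul_nonneg (by positivity) (pow_nonneg (hBnn t) _)), hsum t]
        exact ENNReal.ofReal_le_ofReal (add_pow_succ_le_weighted n hμ (hAnn t) (hBnn t))
    _ = _ := by
        have hmeas : Measurable fun t =>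
            ENNReal.ofReal ((1 + μ) ^ n) * ENNReal.ofReal ((∑ j ∈ A, SA j t) ^ (n + 1)) :=
          (ENNReal.measurable_ofReal.comp (hAmeas.pow_const _)).const_mul _
        rw [lintegral_add_left hmeas,
          lintegral_const_mul' _ _ ENNReal.ofReal_ne_top,
          lintegral_const_mul' _ _ ENNReal.ofReal_ne_top]

lemma cost_union_le (Q : QualityCost) (n : ℕ) {μ : ℝ} (hμ : 0 < μ) {A B : Finset Job}
    (hAB : Disjoint A B) {S SA SB : Sched} (hSA : ∀ j ∈ A, S j = SA j)
    (hSB : ∀ j ∈ B, S j = SB j) (hA : Feasible A SA) (hB : Feasible B SB) :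
    cost Q (n + 1) S (A ∪ B) ≤ ENNReal.ofReal ((1 + μ) ^ n) * cost Q (n + 1) SA A
      + ENNReal.ofReal ((1 + 1 / μ) ^ n) * cost Q (n + 1) SB B := by
  have hsum : ∀ t, ∑ j ∈ A ∪ B, S j t = ∑ j ∈ A, SA j t + ∑ j ∈ B, SB j t := fun t => by
    rw [sum_union hAB, sum_congr rfl fun j hj => congrFun (hSA j hj) t,
      sum_congr rfl fun j hj => congrFun (hSB j hj) t]
  have hFA : Q.F S A = Q.F SA A :=
    Q.profile_congr S SA A fun j hj t => by rw [work, work, hSA j hj]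
  have hFB : Q.F S B = Q.F SB B :=
    Q.profile_congr S SB B fun j hj t => by rw [work, work, hSB j hj]
  have hc1 : 1 ≤ ENNReal.ofReal ((1 + μ) ^ n) :=
    ENNReal.one_le_ofReal.2 (one_le_pow₀ (by linarith))
  have hc2 : 1 ≤ ENNReal.ofReal ((1 + 1 / μ) ^ n) :=
    ENNReal.one_le_ofReal.2 (one_le_pow₀ (by simp only [le_add_iff_nonneg_right]; positivity))
  calc cost Q (n + 1) S (A ∪ B)
      ≤ (ENNReal.ofReal ((1 + μ) ^ n) * energy (n + 1) A SA
          + ENNReal.ofReal ((1 + 1 / μ) ^ n) * energy (n + 1) B SB)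
        + (Q.F SA A + Q.F SB B) :=
        add_le_add (energy_le_of_sum_eq_add n hμ hsum hA hB) (hFA ▸ hFB ▸ Q.subadd S A B hAB)
    _ ≤ _ := by
        rw [cost, cost, mul_add, mul_add, add_add_add_comm]
        gcongr <;> exact le_mul_of_one_le_left zero_le ‹_›

lemma cost_piecewise_le (Q : QualityCost) (n : ℕ) {μ : ℝ} (hμ : 0 < μ) {J G : Finset Job}
    {SA SB : Sched} (hA : Feasible G SA) (hB : Feasible (J \ G) SB) :
    cost Q (n + 1) (fun j t => if j ∈ J ∩ G then SA j t else SB j t) J ≤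
      ENNReal.ofReal ((1 + μ) ^ n) * cost Q (n + 1) SA G
        + ENNReal.ofReal ((1 + 1 / μ) ^ n) * cost Q (n + 1) SB (J \ G) := by
  calc cost Q (n + 1) _ J = cost Q (n + 1) _ (J ∩ G ∪ J \ G) := by
        congr 1; exact (sup_inf_sdiff J G).symm
    _ ≤ ENNReal.ofReal ((1 + μ) ^ n) * cost Q (n + 1) SA (J ∩ G)
          + ENNReal.ofReal ((1 + 1 / μ) ^ n) * cost Q (n + 1) SB (J \ G) :=
        cost_union_le Q n hμ (disjoint_sdiff_inter J G).symm
          (fun j hj => funext fun _ => if_pos hj)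
          (fun j hj => funext fun _ => if_neg fun h => (mem_sdiff.1 hj).2 (mem_inter.1 h).2)
          (hA.mono inter_subset_right) hB
    _ ≤ _ := by
        gcongr
        exact cost_mono_of_subset Q _ inter_subset_right fun j hj => (hA j hj).2.1

lemma weighted_sum_le_robustness_factor_mul (n : ℕ) {μ lam : ℝ} (hμ0 : 0 < μ) (hμ1 : μ ≤ 1)
    (hlam : μ ^ (n + 1) = lam)
    {Ph P γ : ℝ≥0∞} (hPh : ENNReal.ofReal lam * Ph ≤ P) (hγ : P ≤ γ * P) :
    ENNReal.ofReal ((1 + μ) ^ n) * Ph + ENNReal.ofReal ((1 + 1 / μ) ^ n) * (γ * P) ≤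
      (1 + γ * 2 ^ (2 * (n + 1)) * ENNReal.ofReal μ) / ENNReal.ofReal lam * P := by
  set M := ENNReal.ofReal μ
  set L := ENNReal.ofReal lam
  have hL0 : L ≠ 0 := by rw [ne_eq, ENNReal.ofReal_eq_zero, not_le, ← hlam]; positivity
  have hc1 : ENNReal.ofReal ((1 + μ) ^ n) ≤ 1 + 2 ^ n * M := by
    rw [← ENNReal.ofReal_one, ← ENNReal.ofReal_ofNat 2, ← ENNReal.ofReal_pow zero_le_two,
      ← ENNReal.ofReal_mul (by positivity), ← ENNReal.ofReal_add zero_le_one (by positivity)]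
    refine ENNReal.ofReal_le_ofReal ((one_add_pow_le_one_add_mul n hμ0.le hμ1).trans ?_)
    linarith
  have hc2 : ENNReal.ofReal ((1 + 1 / μ) ^ n) * L ≤ 2 ^ n * M := by
    rw [← ENNReal.ofReal_mul (by positivity), ← ENNReal.ofReal_ofNat 2,
      ← ENNReal.ofReal_pow zero_le_two, ← ENNReal.ofReal_mul (by positivity)]
    refine ENNReal.ofReal_le_ofReal ?_
    calc (1 + 1 / μ) ^ n * lam = (1 + μ) ^ n * μ := by
          rw [← hlam, pow_succ, ← mul_assoc, ← mul_pow]; field_simp; ring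
      _ ≤ 2 ^ n * μ := by gcongr; linarith
  rw [← ENNReal.mul_div_right_comm,
    ENNReal.le_div_iff_mul_le (Or.inl hL0) (Or.inl ENNReal.ofReal_ne_top)]
  calc (ENNReal.ofReal ((1 + μ) ^ n) * Ph + ENNReal.ofReal ((1 + 1 / μ) ^ n) * (γ * P)) * L
      = ENNReal.ofReal ((1 + μ) ^ n) * (L * Ph)
          + ENNReal.ofReal ((1 + 1 / μ) ^ n) * L * (γ * P) := by
        ring
    _ ≤ (1 + 2 ^ n * M) * P + 2 ^ n * M * (γ * P) := by gcongr
    _ = P + 2 ^ n * M * P + 2 ^ n * M * (γ * P) := by ring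
    _ ≤ P + 2 ^ n * M * (γ * P) + 2 ^ n * M * (γ * P) := by gcongr
    _ = (1 + γ * 2 ^ (n + 1) * M) * P := by ring
    _ ≤ (1 + γ * 2 ^ (2 * (n + 1)) * M) * P := by
        gcongr
        · exact one_le_two
        · omega

theorem tpe_robustness_general (Q : QualityCost) (α : ℕ) (hα : 1 ≤ α)
    (γon : ℝ≥0∞) (Off On : Finset Job → Sched)
    (hOff : OfflineCompetitive Q α 1 Off) (hOn : OnlineCompetitive Q α γon On)
    (Jhat J : Finset Job) (hJhatV : ValidInstance Jhat) (hJV : ValidInstance J)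
    (lam : ℝ) (hlam0 : 0 < lam) (hlam1 : lam < 1)
    (S : Sched) (hS : TPEOutput Q α Off On Jhat J lam S) :
    cost Q α S J ≤
      max γon
          ((1 + γon * 2 ^ (2 * α) * ENNReal.ofReal lam ^ ((α : ℝ)⁻¹)) /
            ENNReal.ofReal lam) * OPT Q α J := by
  rcases hS with ⟨-, rfl⟩ | ⟨tl, -, hswitch, -, rfl⟩
  · exact (hOn J hJV).2.trans (by gcongr; exact le_max_left _ _)
  set G := restrictGE Jhat tl
  have hGJhat : G ⊆ Jhat := filter_subset _ _
  obtain ⟨hGfeas, -, hGcost⟩ := hOff G (hJhatV.mono hGJhat)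
  obtain ⟨hBfeas, hBcost⟩ := hOn (J \ G) (hJV.mono sdiff_subset)
  obtain ⟨n, rfl⟩ : ∃ n, α = n + 1 := ⟨α - 1, by omega⟩
  set μ := lam ^ ((n + 1 : ℕ) : ℝ)⁻¹
  have hμ0 : 0 < μ := Real.rpow_pos_of_pos hlam0 _
  rw [ENNReal.ofReal_rpow_of_pos hlam0]
  calc _ ≤ _ := cost_piecewise_le Q n hμ0 hGfeas hBfeas
    _ ≤ ENNReal.ofReal ((1 + μ) ^ n) * OPT Q (n + 1) Jhat
          + ENNReal.ofReal ((1 + 1 / μ) ^ n) * (γon * OPT Q (n + 1) J) := by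
        gcongr
        · exact hGcost.trans_eq (one_mul _) |>.trans (OPT_mono Q _ hGJhat)
        · exact hBcost.trans (by gcongr; exact OPT_mono Q _ sdiff_subset)
    _ ≤ _ := weighted_sum_le_robustness_factor_mul n hμ0
          (Real.rpow_le_one hlam0.le hlam1.le (by positivity))
          (Real.rpow_inv_natCast_pow hlam0.le n.succ_ne_zero)
          (hOff.mul_OPT_le_of_lt_OFFcost hJhatV hJV hswitch) (hOn.OPT_le_mul_OPT hJV)
    _ ≤ _ := by gcongr; exact le_max_right _ _

/-- **Corollary 3.5 (robustness).** If the offline algorithm is optimal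
(`γ_off = 1`), then for any `λ ∈ (0,1)` and for all values of the errors
`η₁, η₂`, the schedule output by TPE satisfies
`cost(S,𝒥) ≤ max {γ_on, (1 + γ_on·2^{2α}·λ^{1/α})/λ}·OPT(𝒥)`. -/
theorem tpe_robustness (Q : QualityCost) (α : ℕ) (hα : 1 ≤ α)
    (γon : ℝ≥0∞) (Off On : Finset Job → Sched)
    (hOff : OfflineCompetitive Q α 1 Off) (hOn : OnlineCompetitive Q α γon On)
    (Jhat J : Finset Job) (hJhatV : ValidInstance Jhat) (hJV : ValidInstance J)
    (hne : Jhat.Nonempty) (hpos : 0 < OPT Q α Jhat) (hfin : OPT Q α Jhat < ⊤)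
    (lam : ℝ) (hlam0 : 0 < lam) (hlam1 : lam < 1)
    (S : Sched) (hS : TPEOutput Q α Off On Jhat J lam S) :
    cost Q α S J ≤
      max γon
          ((1 + γon * 2 ^ (2 * α) * ENNReal.ofReal lam ^ ((α : ℝ)⁻¹)) /
            ENNReal.ofReal lam) * OPT Q α J :=
  tpe_robustness_general Q α hα γon Off On hOff hOn Jhat J hJhatV hJV lam hlam0 hlam1 S hS
end

section
/- Let α ≥ 1 be an integer, let 𝒥₁ and 𝒥₂ be disjoint instances, and let S₁ and S₂ be feasible schedules for 𝒥₁ and 𝒥₂ respectively. Consider the schedule S = S₁ + S₂ for 𝒥₁ ∪ 𝒥₂ which at each time t runs the machine at total speed s₁(t) + s₂(t), processing each job j ∈ 𝒥₁ at speed s_{1,j}(t) and each job j ∈ 𝒥₂ at speed s_{2,j}(t). Then cost(S, 𝒥₁ ∪ 𝒥₂) ≤ ( cost(S₁, 𝒥₁)^{1/α} + cost(S₂, 𝒥₂)^{1/α} )^α. -/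
/-!
Energy-efficient scheduling framework (Balkanski–Perivier–Stein–Wei).

A job has an identifier, a release time, a processing time and a weight.
A schedule assigns a speed function to every job.  The energy is
`∫ (total speed)^α`, a quality cost `F` is a monotone subadditive function of
the work profiles, and `cost = energy + F`.

STATEMENT 3 (Lemma 3.1): combining two feasible schedules for disjoint
instances gives
`cost(S, 𝒥₁ ∪ 𝒥₂) ≤ (cost(S₁,𝒥₁)^{1/α} + cost(S₂,𝒥₂)^{1/α})^α`.
-/

open MeasureTheory Finset
open scoped ENNReal BigOperators Classical

/-!
The energy of a schedule is `‖s‖^α` for its total speed `s` in `L^α(0, ∞)`, the combined schedule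
has speed `s₁ + s₂`, and subadditivity bounds its quality cost by `F(S₁, 𝒥₁) + F(S₂, 𝒥₂)`.
Minkowski's inequality `‖s₁ + s₂‖ ≤ ‖s₁‖ + ‖s₂‖` in `L^α`, followed by Minkowski's inequality in
`ℓ^α` for the vectors `(‖s₁‖, F(S₁, 𝒥₁)^{1/α}, 0)` and `(‖s₂‖, 0, F(S₂, 𝒥₂)^{1/α})`, gives the claim.
-/

theorem ENNReal.add_add_le_rpow_of_rpow_inv_le {p : ℝ} (hp : 1 ≤ p) {I F G a b : ℝ≥0∞}
    (h : I ^ p⁻¹ ≤ F ^ p⁻¹ + G ^ p⁻¹) :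
    I + (a + b) ≤ ((F + a) ^ p⁻¹ + (G + b) ^ p⁻¹) ^ p := by
  have hp₀ : 0 < p := zero_lt_one.trans_le hp
  have hI : I ≤ (F ^ p⁻¹ + G ^ p⁻¹) ^ p := (rpow_inv_le_iff hp₀).1 h
  have hℓp := ENNReal.Lp_add_le (s := univ) (f := ![F ^ p⁻¹, a ^ p⁻¹, 0])
    (g := ![G ^ p⁻¹, 0, b ^ p⁻¹]) hp
  simp only [Fin.sum_univ_three, Matrix.cons_val_zero, Matrix.cons_val_one, Matrix.cons_val_two,
    Matrix.head_cons, Matrix.tail_cons, add_zero, zero_add, rpow_inv_rpow hp₀.ne',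
    zero_rpow_of_pos hp₀, one_div] at hℓp
  calc I + (a + b) ≤ (F ^ p⁻¹ + G ^ p⁻¹) ^ p + a + b := by rw [add_assoc]; gcongr
    _ ≤ _ := (rpow_inv_le_iff hp₀).1 hℓp

section Scheduling

variable {J J₁ J₂ : Finset Job} {S S₁ S₂ : Sched}

noncomputable def totalSpeed (J : Finset Job) (S : Sched) (t : ℝ) : ℝ≥0∞ :=
  ENNReal.ofReal (∑ j ∈ J, S j t)

theorem Feasible.measurable (h : Feasible J S) : ∀ j ∈ J, Measurable (S j) :=
  fun j hj => (h j hj).1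

theorem Feasible.nonneg (h : Feasible J S) : ∀ j ∈ J, ∀ t, 0 ≤ S j t :=
  fun j hj => (h j hj).2.1

theorem Feasible.union (h₁ : Feasible J₁ S₁) (h₂ : Feasible J₂ S₂)
    (hS₁ : ∀ j ∈ J₁, S j = S₁ j) (hS₂ : ∀ j ∈ J₂, S j = S₂ j) : Feasible (J₁ ∪ J₂) S := by
  intro j hj
  rcases mem_union.1 hj with hj | hj
  · rw [hS₁ j hj]; exact h₁ j hj
  · rw [hS₂ j hj]; exact h₂ j hj

theorem measurable_totalSpeed (h : ∀ j ∈ J, Measurable (S j)) : Measurable (totalSpeed J S) :=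
  (Finset.measurable_sum J h).ennreal_ofReal

theorem totalSpeed_union (hdisj : Disjoint J₁ J₂)
    (hS₁ : ∀ j ∈ J₁, S j = S₁ j) (hS₂ : ∀ j ∈ J₂, S j = S₂ j)
    (h₁ : ∀ j ∈ J₁, ∀ t, 0 ≤ S₁ j t) (h₂ : ∀ j ∈ J₂, ∀ t, 0 ≤ S₂ j t) :
    totalSpeed (J₁ ∪ J₂) S = totalSpeed J₁ S₁ + totalSpeed J₂ S₂ := by
  funext t
  rw [totalSpeed, sum_union hdisj, sum_congr rfl fun j hj => congrFun (hS₁ j hj) t,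
    sum_congr rfl fun j hj => congrFun (hS₂ j hj) t,
    ENNReal.ofReal_add (sum_nonneg fun j hj => h₁ j hj t) (sum_nonneg fun j hj => h₂ j hj t)]
  rfl

theorem energy_eq_setLIntegral_totalSpeed_rpow (α : ℕ) (h : ∀ j ∈ J, ∀ t, 0 ≤ S j t) :
    energy α J S = ∫⁻ t in Set.Ioi 0, totalSpeed J S t ^ (α : ℝ) := by
  refine lintegral_congr fun t => ?_
  rw [ENNReal.ofReal_pow (sum_nonneg fun j hj => h j hj t), ENNReal.rpow_natCast]
  rfl

theorem QualityCost.F_congr (Q : QualityCost) (h : ∀ j ∈ J, S j = S₁ j) : Q.F S J = Q.F S₁ J :=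
  Q.profile_congr _ _ _ fun j hj t => by rw [work, work, h j hj]

theorem QualityCost.F_union_le (Q : QualityCost) (hdisj : Disjoint J₁ J₂)
    (hS₁ : ∀ j ∈ J₁, S j = S₁ j) (hS₂ : ∀ j ∈ J₂, S j = S₂ j) :
    Q.F S (J₁ ∪ J₂) ≤ Q.F S₁ J₁ + Q.F S₂ J₂ :=
  (Q.subadd S J₁ J₂ hdisj).trans_eq (by rw [Q.F_congr hS₁, Q.F_congr hS₂])

end Scheduling

theorem cost_union_of_two_schedules_general (Q : QualityCost) (α : ℕ) (hα : 1 ≤ α)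
    (J₁ J₂ : Finset Job) (hdisj : Disjoint J₁ J₂)
    (S₁ S₂ : Sched) (h₁ : Feasible J₁ S₁) (h₂ : Feasible J₂ S₂)
    (S : Sched) (hS : ∀ j t, S j t = if j ∈ J₁ then S₁ j t else S₂ j t) :
    cost Q α S (J₁ ∪ J₂) ≤
      (cost Q α S₁ J₁ ^ ((α : ℝ)⁻¹) + cost Q α S₂ J₂ ^ ((α : ℝ)⁻¹)) ^ (α : ℝ) := by
  have hp : (1 : ℝ) ≤ α := by exact_mod_cast hα
  have hS₁ : ∀ j ∈ J₁, S j = S₁ j := fun j hj => funext fun t => by simp [hS, hj]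
  have hS₂ : ∀ j ∈ J₂, S j = S₂ j := fun j hj => funext fun t => by
    simp [hS, disjoint_right.1 hdisj hj]
  have hminkowski := ENNReal.lintegral_Lp_add_le (μ := volume.restrict (Set.Ioi 0))
    (measurable_totalSpeed h₁.measurable).aemeasurable
    (measurable_totalSpeed h₂.measurable).aemeasurable hp
  rw [← totalSpeed_union hdisj hS₁ hS₂ h₁.nonneg h₂.nonneg, one_div,
    ← energy_eq_setLIntegral_totalSpeed_rpow α (h₁.union h₂ hS₁ hS₂).nonneg,
    ← energy_eq_setLIntegral_totalSpeed_rpow α h₁.nonneg,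
    ← energy_eq_setLIntegral_totalSpeed_rpow α h₂.nonneg] at hminkowski
  calc cost Q α S (J₁ ∪ J₂) ≤ energy α (J₁ ∪ J₂) S + (Q.F S₁ J₁ + Q.F S₂ J₂) :=
        add_le_add_right (Q.F_union_le hdisj hS₁ hS₂) _
    _ ≤ _ := ENNReal.add_add_le_rpow_of_rpow_inv_le hp hminkowski

/-- **Lemma 3.1**: the sum of two feasible schedules for disjoint instances has
cost at most `(cost(S₁,𝒥₁)^{1/α} + cost(S₂,𝒥₂)^{1/α})^α`. -/
theorem cost_union_of_two_schedules (Q : QualityCost) (α : ℕ) (hα : 1 ≤ α)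
    (J₁ J₂ : Finset Job) (hdisj : Disjoint J₁ J₂)
    (hJ₁ : ValidInstance J₁) (hJ₂ : ValidInstance J₂)
    (S₁ S₂ : Sched) (h₁ : Feasible J₁ S₁) (h₂ : Feasible J₂ S₂)
    (S : Sched) (hS : ∀ j t, S j t = if j ∈ J₁ then S₁ j t else S₂ j t) :
    cost Q α S (J₁ ∪ J₂) ≤
      (cost Q α S₁ J₁ ^ ((α : ℝ)⁻¹) + cost Q α S₂ J₂ ^ ((α : ℝ)⁻¹)) ^ (α : ℝ) :=
  cost_union_of_two_schedules_general Q α hα J₁ J₂ hdisj S₁ S₂ h₁ h₂ S hS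
end

section
/- Let F be a monotone subadditive quality cost with integer exponent α ≥ 1, let Ĵ be a nonempty instance with 0 < OPT(Ĵ) < ∞, let 𝒥 be any instance, and set η₂ = OPT(Ĵ \ 𝒥)/OPT(Ĵ), where Ĵ \ 𝒥 is the set of predicted jobs that did not arrive and 𝒥 ∩ Ĵ is the set of correctly predicted jobs. Then OPT(𝒥 ∩ Ĵ) ≥ (1 − η₂^{1/α})^α · OPT(Ĵ). -/
open MeasureTheory Finset
open scoped ENNReal BigOperators Classical

/-! Gluing two feasible schedules of disjoint job sets `A` and `B` shows that `OPT^{1/α}` is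
subadditive: the energies combine by Minkowski's inequality in `L^α`, the quality costs by
subadditivity of `F`, and the two parts by Minkowski's inequality in `ℓ^α`. Splitting
`Ĵ = (Ĵ \ 𝒥) ∪ (𝒥 ∩ Ĵ)`, where `OPT(Ĵ \ 𝒥) = η₂ · OPT(Ĵ)`, this gives
`(1 - η₂^{1/α}) · OPT(Ĵ)^{1/α} ≤ OPT(𝒥 ∩ Ĵ)^{1/α}`. -/

namespace ENNReal

lemma rpow_inv_add_le_of_rpow_inv_le_of_le {p : ℝ} (hp : 1 ≤ p) {e e₁ e₂ f f₁ f₂ : ℝ≥0∞}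
    (he : e ^ p⁻¹ ≤ e₁ ^ p⁻¹ + e₂ ^ p⁻¹) (hf : f ≤ f₁ + f₂) :
    (e + f) ^ p⁻¹ ≤ (e₁ + f₁) ^ p⁻¹ + (e₂ + f₂) ^ p⁻¹ := by
  have hp₀ : p ≠ 0 := (zero_lt_one.trans_le hp).ne'
  have he' : e ≤ (e₁ ^ p⁻¹ + e₂ ^ p⁻¹) ^ p := by
    simpa only [rpow_inv_rpow hp₀] using rpow_le_rpow he (zero_le_one.trans hp)
  have hf' : f ≤ (f₁ ^ p⁻¹ + f₂ ^ p⁻¹) ^ p := hf.trans <| by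
    simpa only [rpow_inv_rpow hp₀] using add_rpow_le_rpow_add (f₁ ^ p⁻¹) (f₂ ^ p⁻¹) hp
  -- Minkowski in `ℓ^p` for the vectors `(e₁^{1/p}, f₁^{1/p})` and `(e₂^{1/p}, f₂^{1/p})`
  have hM := Lp_add_le (univ : Finset Bool) (fun b => if b then e₁ ^ p⁻¹ else f₁ ^ p⁻¹)
    (fun b => if b then e₂ ^ p⁻¹ else f₂ ^ p⁻¹) hp
  simp only [Fintype.sum_bool, Bool.false_eq_true, if_true, if_false, one_div,
    rpow_inv_rpow hp₀] at hM
  exact (rpow_le_rpow (add_le_add he' hf') (inv_nonneg.2 (zero_le_one.trans hp))).trans hM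

lemma one_sub_div_rpow_inv_rpow_mul_le {p : ℝ} (hp : 0 < p) {a b c : ℝ≥0∞} (hc : c ≠ ⊤)
    (h : c ^ p⁻¹ ≤ a ^ p⁻¹ + b ^ p⁻¹) : (1 - (b / c) ^ p⁻¹) ^ p * c ≤ a := by
  rcases eq_or_ne c 0 with rfl | hc₀
  · simp
  have hroot : (b / c) ^ p⁻¹ * c ^ p⁻¹ = b ^ p⁻¹ := by
    rw [← mul_rpow_of_nonneg _ _ (inv_nonneg.2 hp.le), ENNReal.div_mul_cancel hc₀ hc]
  have key : (1 - (b / c) ^ p⁻¹) * c ^ p⁻¹ ≤ a ^ p⁻¹ := by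
    rw [ENNReal.sub_mul fun _ _ => rpow_ne_top_of_nonneg (inv_nonneg.2 hp.le) hc, one_mul,
      hroot]
    exact tsub_le_iff_right.2 h
  simpa only [mul_rpow_of_nonneg _ _ hp.le, rpow_inv_rpow hp.ne'] using rpow_le_rpow key hp.le

end ENNReal

noncomputable def glue (A : Finset Job) (S₁ S₂ : Sched) : Sched :=
  fun j => if j ∈ A then S₁ j else S₂ j

section Glue

variable {A B : Finset Job} {S₁ S₂ : Sched} {j : Job}

lemma glue_of_mem (h : j ∈ A) : glue A S₁ S₂ j = S₁ j := if_pos h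

lemma glue_of_notMem (h : j ∉ A) : glue A S₁ S₂ j = S₂ j := if_neg h

lemma glue_of_mem_right (hd : Disjoint A B) (h : j ∈ B) : glue A S₁ S₂ j = S₂ j :=
  glue_of_notMem (disjoint_right.1 hd h)

lemma Feasible.glue (h₁ : Feasible A S₁) (h₂ : Feasible B S₂) :
    Feasible (A ∪ B) (glue A S₁ S₂) := by
  intro j hj
  by_cases hjA : j ∈ A
  · rw [glue_of_mem hjA]; exact h₁ j hjA
  · rw [glue_of_notMem hjA]; exact h₂ j ((mem_union.1 hj).resolve_left hjA)

lemma Feasible.sum_nonneg {J : Finset Job} {S : Sched} (h : Feasible J S) (t : ℝ) :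
    0 ≤ ∑ j ∈ J, S j t :=
  Finset.sum_nonneg fun j hj => (h j hj).2.1 t

lemma Feasible.measurable_sum {J : Finset Job} {S : Sched} (h : Feasible J S) :
    Measurable fun t => ∑ j ∈ J, S j t :=
  Finset.measurable_sum J fun j hj => (h j hj).1

lemma energy_eq_lintegral_rpow {α : ℕ} {J : Finset Job} {S : Sched}
    (h : ∀ t, 0 ≤ ∑ j ∈ J, S j t) :
    energy α J S = ∫⁻ t in Set.Ioi 0, ENNReal.ofReal (∑ j ∈ J, S j t) ^ (α : ℝ) :=
  lintegral_congr fun t => by rw [ENNReal.ofReal_pow (h t), ENNReal.rpow_natCast]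

lemma sum_union_glue (hd : Disjoint A B) (t : ℝ) :
    ∑ j ∈ A ∪ B, glue A S₁ S₂ j t = ∑ j ∈ A, S₁ j t + ∑ j ∈ B, S₂ j t := by
  rw [sum_union hd]
  congr 1
  · exact sum_congr rfl fun j hj => by rw [glue_of_mem hj]
  · exact sum_congr rfl fun j hj => by rw [glue_of_mem_right hd hj]

lemma energy_glue_rpow_inv_le {α : ℕ} (hα : 1 ≤ α) (hd : Disjoint A B)
    (h₁ : Feasible A S₁) (h₂ : Feasible B S₂) :
    energy α (A ∪ B) (glue A S₁ S₂) ^ (α : ℝ)⁻¹ ≤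
      energy α A S₁ ^ (α : ℝ)⁻¹ + energy α B S₂ ^ (α : ℝ)⁻¹ := by
  have hsum : ∀ t, ENNReal.ofReal (∑ j ∈ A ∪ B, glue A S₁ S₂ j t) =
      ENNReal.ofReal (∑ j ∈ A, S₁ j t) + ENNReal.ofReal (∑ j ∈ B, S₂ j t) := fun t => by
    rw [sum_union_glue hd, ENNReal.ofReal_add (h₁.sum_nonneg t) (h₂.sum_nonneg t)]
  rw [energy_eq_lintegral_rpow (h₁.glue h₂).sum_nonneg, energy_eq_lintegral_rpow h₁.sum_nonneg,
    energy_eq_lintegral_rpow h₂.sum_nonneg]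
  simp only [hsum, ← one_div]
  exact ENNReal.lintegral_Lp_add_le h₁.measurable_sum.ennreal_ofReal.aemeasurable
    h₂.measurable_sum.ennreal_ofReal.aemeasurable (by exact_mod_cast hα)

lemma QualityCost.F_glue_le (Q : QualityCost) (hd : Disjoint A B) :
    Q.F (glue A S₁ S₂) (A ∪ B) ≤ Q.F S₁ A + Q.F S₂ B := by
  have hA : Q.F (glue A S₁ S₂) A = Q.F S₁ A :=
    Q.profile_congr _ _ _ fun j hj t => by rw [work, work, glue_of_mem hj]
  have hB : Q.F (glue A S₁ S₂) B = Q.F S₂ B :=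
    Q.profile_congr _ _ _ fun j hj t => by rw [work, work, glue_of_mem_right hd hj]
  exact (Q.subadd _ A B hd).trans_eq (by rw [hA, hB])

lemma cost_glue_rpow_inv_le (Q : QualityCost) {α : ℕ} (hα : 1 ≤ α) (hd : Disjoint A B)
    (h₁ : Feasible A S₁) (h₂ : Feasible B S₂) :
    cost Q α (glue A S₁ S₂) (A ∪ B) ^ (α : ℝ)⁻¹ ≤
      cost Q α S₁ A ^ (α : ℝ)⁻¹ + cost Q α S₂ B ^ (α : ℝ)⁻¹ :=
  ENNReal.rpow_inv_add_le_of_rpow_inv_le_of_le (by exact_mod_cast hα)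
    (energy_glue_rpow_inv_le hα hd h₁ h₂) (Q.F_glue_le hd)

end Glue

lemma OPT_rpow (Q : QualityCost) (α : ℕ) (J : Finset Job) {y : ℝ} (hy : 0 < y) :
    OPT Q α J ^ y = ⨅ (S : Sched) (_ : Feasible J S), cost Q α S J ^ y := by
  simp only [OPT, ← ENNReal.orderIsoRpow_apply y hy, OrderIso.map_iInf]

lemma OPT_union_rpow_inv_le (Q : QualityCost) {α : ℕ} (hα : 1 ≤ α) {A B : Finset Job}
    (hd : Disjoint A B) :
    OPT Q α (A ∪ B) ^ (α : ℝ)⁻¹ ≤ OPT Q α A ^ (α : ℝ)⁻¹ + OPT Q α B ^ (α : ℝ)⁻¹ := by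
  have hy : (0 : ℝ) < (α : ℝ)⁻¹ := by positivity
  rw [OPT_rpow Q α A hy, OPT_rpow Q α B hy]
  refine ENNReal.le_iInf₂_add_iInf₂ fun S₁ h₁ S₂ h₂ => ?_
  calc OPT Q α (A ∪ B) ^ (α : ℝ)⁻¹ ≤ cost Q α (glue A S₁ S₂) (A ∪ B) ^ (α : ℝ)⁻¹ :=
        ENNReal.rpow_le_rpow (iInf₂_le _ (h₁.glue h₂)) hy.le
    _ ≤ _ := cost_glue_rpow_inv_le Q hα hd h₁ h₂

theorem opt_correctly_predicted_lower_bound_general (Q : QualityCost) (α : ℕ) (hα : 1 ≤ α)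
    (Jhat J : Finset Job) (hfin : OPT Q α Jhat < ⊤)
    (η₂ : ℝ≥0∞) (hη₂ : η₂ = OPT Q α (Jhat \ J) / OPT Q α Jhat) :
    (1 - η₂ ^ ((α : ℝ)⁻¹)) ^ (α : ℝ) * OPT Q α Jhat ≤ OPT Q α (J ∩ Jhat) := by
  have hsplit := OPT_union_rpow_inv_le Q hα (disjoint_sdiff_inter Jhat J)
  rw [sdiff_union_inter, add_comm, inter_comm Jhat J] at hsplit
  rw [hη₂]
  exact ENNReal.one_sub_div_rpow_inv_rpow_mul_le (by exact_mod_cast hα) hfin.ne hsplit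

/-- **Corollary 3.3 (first part).** With `η₂ = OPT(Ĵ \ 𝒥)/OPT(Ĵ)`, one has
`OPT(𝒥 ∩ Ĵ) ≥ (1 − η₂^{1/α})^α · OPT(Ĵ)`. -/
theorem opt_correctly_predicted_lower_bound (Q : QualityCost) (α : ℕ) (hα : 1 ≤ α)
    (Jhat J : Finset Job) (hJhatV : ValidInstance Jhat) (hJV : ValidInstance J)
    (hne : Jhat.Nonempty) (hpos : 0 < OPT Q α Jhat) (hfin : OPT Q α Jhat < ⊤)
    (η₂ : ℝ≥0∞) (hη₂ : η₂ = OPT Q α (Jhat \ J) / OPT Q α Jhat) :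
    (1 - η₂ ^ ((α : ℝ)⁻¹)) ^ (α : ℝ) * OPT Q α Jhat ≤ OPT Q α (J ∩ Jhat) :=
  opt_correctly_predicted_lower_bound_general Q α hα Jhat J hfin η₂ hη₂
end
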